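/- Let q ≥ 2 be an integer. There exist an integer e ≥ 0 and an additive subgroup C of Z_q^2 with more than one element such that C is a perfect e-code and C is a cyclic group, if and only if q = a·p^2 for some odd prime p and some odd positive integer a. -/
import Mathlib


/-- Lee distance on `ZMod q`. -/
def leeDist {q : ℕ} (x y : ZMod q) : ℕ := min (x - y).val (q - (x - y).val)

/-- Maximum (Chebyshev) distance on `(ZMod q)^n`. -/
def maxDist {q n : ℕ} (x y : Fin n → ZMod q) : ℕ :=
  Finset.univ.sup fun i => leeDist (x i) (y i)

/-- `C` is a perfect `e`-code: every point is within distance `e` of exactly one codeword. -/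
def IsPerfectCode {q n : ℕ} (e : ℕ) (C : Set (Fin n → ZMod q)) : Prop :=
  ∀ x : Fin n → ZMod q, ∃! c, c ∈ C ∧ maxDist x c ≤ e

lemma leeDist_shift {q : ℕ} (x y : ZMod q) : leeDist x y = leeDist (x - y) 0 := by
  simp [leeDist]

lemma maxDist_shift {q n : ℕ} (x y : Fin n → ZMod q) : maxDist x y = maxDist (x - y) 0 := by
  unfold maxDist
  congr 1; funext i; simpa using leeDist_shift (x i) (y i)

lemma mem_ball_iff {q : ℕ} [NeZero q] {e : ℕ} (he : 2 * e < q) (z : ZMod q) :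
    leeDist z 0 ≤ e ↔ ∃ m : ℤ, m ∈ Finset.Icc (-(e:ℤ)) (e:ℤ) ∧ (m : ZMod q) = z := by
  have hq : 0 < q := Nat.pos_of_ne_zero (NeZero.ne q)
  have hv := z.val_lt
  constructor
  · intro h
    simp only [leeDist, sub_zero, min_le_iff] at h
    rcases h with h | h
    · refine ⟨z.val, ?_, ?_⟩
      · simp only [Finset.mem_Icc]
        constructor <;> omega
      · exact_mod_cast z.natCast_zmod_val
    · refine ⟨(z.val : ℤ) - q, ?_, ?_⟩
      · simp only [Finset.mem_Icc]
        constructor <;> omega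
      · push_cast
        simp [z.natCast_zmod_val, ZMod.natCast_self]
  · rintro ⟨m, hm, rfl⟩
    simp only [Finset.mem_Icc] at hm
    simp only [leeDist, sub_zero, min_le_iff]
    rcases le_or_gt 0 m with h0 | h0
    · left
      lift m to ℕ using h0
      rw [Int.cast_natCast, ZMod.val_cast_of_lt (by omega)]
      omega
    · right
      have : ((m + q : ℤ) : ZMod q) = (m : ZMod q) := by push_cast; simp
      rw [← this]
      have h1 : (0:ℤ) ≤ m + q := by omega
      obtain ⟨n, hn⟩ : ∃ n : ℕ, (n:ℤ) = m + q := ⟨(m+q).toNat, Int.toNat_of_nonneg h1⟩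
      rw [← hn, Int.cast_natCast, ZMod.val_cast_of_lt (by omega)]
      omega

lemma cast_inj_on_Icc {q : ℕ} {e : ℕ} (he : 2 * e < q) :
    Set.InjOn (fun m : ℤ => (m : ZMod q)) (Finset.Icc (-(e:ℤ)) (e:ℤ)) := by
  intro m hm m' hm' h
  simp only [Finset.coe_Icc, Set.mem_Icc] at hm hm'
  have hd : (q:ℤ) ∣ m - m' := by
    rw [ZMod.intCast_eq_intCast_iff'] at h
    exact Int.ModEq.dvd (Int.ModEq.symm h)
  have := Int.eq_zero_of_abs_lt_dvd hd (by rw [abs_lt]; omega)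
  omega

lemma maxDist_le_iff {q n : ℕ} (x : Fin n → ZMod q) (e : ℕ) :
    maxDist x 0 ≤ e ↔ ∀ i, leeDist (x i) 0 ≤ e := by
  simp [maxDist, Finset.sup_le_iff]

lemma ncard_ball1 {q : ℕ} [NeZero q] {e : ℕ} (he : 2 * e < q) :
    Nat.card {z : ZMod q // leeDist z 0 ≤ e} = 2 * e + 1 := by
  have hset : {z : ZMod q | leeDist z 0 ≤ e}
      = (fun m : ℤ => (m : ZMod q)) '' (Finset.Icc (-(e:ℤ)) (e:ℤ)) := by
    ext z
    simp only [Set.mem_setOf_eq, mem_ball_iff he z, Set.mem_image, Finset.mem_coe]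
  have : Nat.card {z : ZMod q // leeDist z 0 ≤ e}
      = Set.ncard {z : ZMod q | leeDist z 0 ≤ e} := rfl
  rw [this, hset, Set.ncard_image_of_injOn (cast_inj_on_Icc he), Set.ncard_coe_finset]
  rw [Int.card_Icc]
  omega


lemma ncard_ball2 {q : ℕ} [NeZero q] {e : ℕ} (he : 2 * e < q) :
    Nat.card {x : Fin 2 → ZMod q // maxDist x 0 ≤ e} = (2 * e + 1) ^ 2 := by
  have h1 : ∀ x : Fin 2 → ZMod q, maxDist x 0 ≤ e ↔ ∀ i, leeDist (x i) 0 ≤ e :=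
    fun x => maxDist_le_iff x e
  have e1 : {x : Fin 2 → ZMod q // maxDist x 0 ≤ e}
      ≃ {x : Fin 2 → ZMod q // ∀ i, leeDist (x i) 0 ≤ e} :=
    Equiv.subtypeEquivRight h1
  have e2 : {x : Fin 2 → ZMod q // ∀ i, leeDist (x i) 0 ≤ e}
      ≃ ∀ _ : Fin 2, {z : ZMod q // leeDist z 0 ≤ e} :=
    Equiv.subtypePiEquivPi (p := fun _ z => leeDist z 0 ≤ e)
  rw [Nat.card_congr (e1.trans e2), Nat.card_pi, Finset.prod_const, ncard_ball1 he]
  simp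

lemma maxDist_near {q n : ℕ} (x c : Fin n → ZMod q) (e : ℕ) :
    maxDist x c ≤ e ↔ maxDist (x - c) 0 ≤ e := by rw [maxDist_shift]

lemma perfect_iff_bijective {q : ℕ} (e : ℕ) (C : AddSubgroup (Fin 2 → ZMod q)) :
    IsPerfectCode e (C : Set (Fin 2 → ZMod q)) ↔
    Function.Bijective (fun p : C × {x : Fin 2 → ZMod q // maxDist x 0 ≤ e} =>
      (p.1 : Fin 2 → ZMod q) + (p.2 : Fin 2 → ZMod q)) := by
  constructor
  · intro h
    constructor
    · rintro ⟨⟨c, hc⟩, ⟨b, hb⟩⟩ ⟨⟨c', hc'⟩, ⟨b', hb'⟩⟩ hx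
      simp only at hx
      obtain ⟨w, _, huniq⟩ := h (c + b)
      have h1 : c = w := huniq c ⟨hc, by rw [maxDist_near]; simpa using hb⟩
      have h2 : c' = w := huniq c' ⟨hc', by rw [maxDist_near, hx]; simpa using hb'⟩
      have hcc : c = c' := h1.trans h2.symm
      subst hcc
      have hbb : b = b' := by
        have := hx
        exact add_left_cancel this
      simp [hbb]
    · intro x
      obtain ⟨c, ⟨hc, hd⟩, _⟩ := h x
      refine ⟨(⟨c, hc⟩, ⟨x - c, by rwa [maxDist_near] at hd⟩), by simp⟩
  · intro h x
    obtain ⟨⟨⟨c, hc⟩, ⟨b, hb⟩⟩, hx⟩ := h.surjective x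
    simp only at hx
    refine ⟨c, ⟨hc, ?_⟩, ?_⟩
    · rw [maxDist_near, ← hx]; simpa using hb
    · rintro c' ⟨hc', hd'⟩
      have key : (fun p : C × {x : Fin 2 → ZMod q // maxDist x 0 ≤ e} =>
          (p.1 : Fin 2 → ZMod q) + (p.2 : Fin 2 → ZMod q))
          (⟨c', hc'⟩, ⟨x - c', by rwa [maxDist_near] at hd'⟩)
          = (fun p : C × {x : Fin 2 → ZMod q // maxDist x 0 ≤ e} =>
          (p.1 : Fin 2 → ZMod q) + (p.2 : Fin 2 → ZMod q)) (⟨c, hc⟩, ⟨b, hb⟩) := by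
        simp only
        rw [hx]
        simp
      have := h.injective key
      exact congrArg (fun p => (p.1 : Fin 2 → ZMod q)) this

lemma forward_dir {q : ℕ} (hq : 2 ≤ q) (e : ℕ) (C : AddSubgroup (Fin 2 → ZMod q))
    (hperf : IsPerfectCode e (C : Set (Fin 2 → ZMod q)))
    (hnt : (C : Set (Fin 2 → ZMod q)).Nontrivial)
    (hcyc : IsAddCyclic C) :
    ∃ p a : ℕ, p.Prime ∧ Odd p ∧ Odd a ∧ 0 < a ∧ q = a * p ^ 2 := by
  haveI : NeZero q := ⟨by omega⟩
  obtain ⟨c, hc, c', hc', hne⟩ := hnt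
  -- 2e < q
  have he : 2 * e < q := by
    by_contra hle
    push_neg at hle
    have hball : ∀ x y : Fin 2 → ZMod q, maxDist x y ≤ e := by
      intro x y
      apply Finset.sup_le
      intro i _
      have := ((x i) - (y i)).val_lt
      simp only [leeDist]
      omega
    obtain ⟨w, _, huniq⟩ := hperf c
    have h1 : c = w := huniq c ⟨hc, hball c c⟩
    have h2 : c' = w := huniq c' ⟨hc', hball c c'⟩
    exact hne (h1.trans h2.symm)
  -- cardinality equation
  have hbij := (perfect_iff_bijective e C).mp hperf
  have hcard : q ^ 2 = Nat.card C * (2 * e + 1) ^ 2 := by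
    have h1 := Nat.card_eq_of_bijective _ hbij
    rw [Nat.card_prod, ncard_ball2 he] at h1
    rw [Nat.card_pi, Finset.prod_const] at h1
    simp only [Nat.card_zmod, Finset.card_univ, Fintype.card_fin] at h1
    exact h1.symm
  -- card C divides q
  have hdvd : Nat.card C ∣ q := by
    obtain ⟨g, hg⟩ := hcyc
    have htop : AddSubgroup.zmultiples g = ⊤ := by
      rw [eq_top_iff]; exact fun x _ => hg x
    have h1 : Nat.card C = addOrderOf g := by
      rw [← Nat.card_zmultiples g, htop]
      exact Nat.card_congr AddSubgroup.topEquiv.symm.toEquiv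
    have hz : q • g = (0 : C) := by
      apply Subtype.ext
      show q • (g : Fin 2 → ZMod q) = 0
      funext i
      show q • ((g : Fin 2 → ZMod q) i) = 0
      simp [nsmul_eq_mul, ZMod.natCast_self]
    rw [h1]
    exact addOrderOf_dvd_of_nsmul_eq_zero hz
  have hN2 : 2 ≤ Nat.card C := by
    haveI : Nontrivial C := ⟨⟨⟨c, hc⟩, ⟨c', hc'⟩, by simp [hne]⟩⟩
    exact Finite.one_lt_card_iff_nontrivial.mpr this
  set N := Nat.card C with hNdef
  obtain ⟨t, ht⟩ := hdvd
  have htpos : 0 < t := by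
    rcases Nat.eq_zero_or_pos t with h | h
    · subst h; simp at ht; omega
    · exact h
  have hNpos : 0 < N := by omega
  have hs : (2 * e + 1) ^ 2 = N * t ^ 2 := by
    have h2 : N * (N * t ^ 2) = N * (2 * e + 1) ^ 2 := by
      rw [← hcard, ht]; ring
    exact (Nat.eq_of_mul_eq_mul_left hNpos h2).symm
  have htds : t ∣ 2 * e + 1 := by
    refine (Nat.pow_dvd_pow_iff (two_ne_zero)).mp ⟨N, ?_⟩
    rw [hs]; ring
  obtain ⟨u, hu⟩ := htds
  have hNu : N = u ^ 2 := by
    have h3 : t ^ 2 * u ^ 2 = t ^ 2 * N := by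
      rw [← mul_pow, ← hu, hs]; ring
    exact (Nat.eq_of_mul_eq_mul_left (pow_pos htpos 2) h3).symm
  have hu2 : 2 ≤ u := by nlinarith
  have hodds : Odd (2 * e + 1) := Nat.odd_iff.mpr (by omega)
  rw [hu] at hodds
  obtain ⟨hoddt, hoddu⟩ := Nat.odd_mul.mp hodds
  have hp : u.minFac.Prime := Nat.minFac_prime (by omega)
  obtain ⟨w, hw⟩ := u.minFac_dvd
  have hpodd : Odd u.minFac := by
    rcases Nat.even_or_odd u.minFac with hev | hod
    · exfalso
      have : Even u := (hw ▸ hev.mul_right w)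
      exact (Nat.not_even_iff_odd.mpr hoddu) this
    · exact hod
  have hwodd : Odd w := (Nat.odd_mul.mp (hw ▸ hoddu)).2
  have hwpos : 0 < w := hwodd.pos
  obtain ⟨P, hPdef⟩ : ∃ P, P = u.minFac := ⟨u.minFac, rfl⟩
  rw [← hPdef] at hp hpodd hw
  refine ⟨P, w ^ 2 * t, hp, hpodd, ?_, ?_, ?_⟩
  · exact Nat.odd_mul.mpr ⟨hwodd.pow, hoddt⟩
  · positivity
  · rw [ht, hNu, hw]; ring

lemma backward_dir {q p a : ℕ} (hp : p.Prime) (hpodd : Odd p) (haodd : Odd a)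
    (hapos : 0 < a) (hqe : q = a * p ^ 2) :
    ∃ e : ℕ, ∃ C : AddSubgroup (Fin 2 → ZMod q),
        IsPerfectCode e (C : Set (Fin 2 → ZMod q)) ∧
        (C : Set (Fin 2 → ZMod q)).Nontrivial ∧
        IsAddCyclic C := by
  have hp2 : 2 ≤ p := hp.two_le
  have hq2 : 2 ≤ q := by subst hqe; nlinarith
  haveI : NeZero q := ⟨by omega⟩
  have hsodd : Odd (a * p) := Nat.odd_mul.mpr ⟨haodd, hpodd⟩
  set e := a * p / 2 with he
  have hse : 2 * e + 1 = a * p := by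
    have := Nat.odd_iff.mp hsodd
    omega
  have hlt : 2 * e < q := by subst hqe; nlinarith
  set g : Fin 2 → ZMod q := ![((a * p : ℕ) : ZMod q), ((a : ℕ) : ZMod q)] with hg
  have hg0 : g 0 = ((a * p : ℕ) : ZMod q) := rfl
  have hg1 : g 1 = ((a : ℕ) : ZMod q) := rfl
  -- p^2 • g = 0
  have hzero : (p ^ 2) • g = 0 := by
    funext i
    fin_cases i
    · show (p ^ 2) • ((a * p : ℕ) : ZMod q) = 0
      calc (p ^ 2) • ((a * p : ℕ) : ZMod q) = ((p ^ 2 * (a * p) : ℕ) : ZMod q) := by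
            push_cast; ring
        _ = 0 := by
            rw [ZMod.natCast_eq_zero_iff]
            exact ⟨p, by rw [hqe]; ring⟩
    · show (p ^ 2) • ((a : ℕ) : ZMod q) = 0
      calc (p ^ 2) • ((a : ℕ) : ZMod q) = ((p ^ 2 * a : ℕ) : ZMod q) := by
            push_cast; ring
        _ = 0 := by
            rw [ZMod.natCast_eq_zero_iff]
            exact ⟨1, by rw [hqe]; ring⟩
  have hord : addOrderOf g = p ^ 2 := by
    have h1 : addOrderOf g ∣ p ^ 2 := addOrderOf_dvd_of_nsmul_eq_zero hzero
    have h2 : p ^ 2 ∣ addOrderOf g := by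
      have hcomp : (addOrderOf g) • (g 1) = 0 := by
        have := addOrderOf_nsmul_eq_zero g
        calc (addOrderOf g) • (g 1) = ((addOrderOf g) • g) 1 := rfl
          _ = 0 := by rw [this]; rfl
      have h3 : addOrderOf (g 1) ∣ addOrderOf g := addOrderOf_dvd_of_nsmul_eq_zero hcomp
      have h4 : addOrderOf (g 1) = p ^ 2 := by
        rw [hg1, ZMod.addOrderOf_coe a (NeZero.ne q), hqe,
          Nat.gcd_eq_right (Dvd.intro _ rfl), Nat.mul_div_cancel_left _ hapos]
      rwa [h4] at h3
    exact Nat.dvd_antisymm h1 h2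
  refine ⟨e, AddSubgroup.zmultiples g, ?_, ?_, ?_⟩
  · rw [perfect_iff_bijective]
    rw [Nat.bijective_iff_injective_and_card]
    constructor
    · rintro ⟨⟨c, hc⟩, ⟨b, hb⟩⟩ ⟨⟨c', hc'⟩, ⟨b', hb'⟩⟩ hx
      simp only at hx
      obtain ⟨k, hk⟩ := AddSubgroup.mem_zmultiples_iff.mp hc
      obtain ⟨k', hk'⟩ := AddSubgroup.mem_zmultiples_iff.mp hc'
      have hb0 := (maxDist_le_iff b e).mp hb
      have hb'0 := (maxDist_le_iff b' e).mp hb'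
      obtain ⟨m0, hm0, hm0e⟩ := (mem_ball_iff hlt (b 0)).mp (hb0 0)
      obtain ⟨m1, hm1, hm1e⟩ := (mem_ball_iff hlt (b 1)).mp (hb0 1)
      obtain ⟨n0, hn0, hn0e⟩ := (mem_ball_iff hlt (b' 0)).mp (hb'0 0)
      obtain ⟨n1, hn1, hn1e⟩ := (mem_ball_iff hlt (b' 1)).mp (hb'0 1)
      simp only [Finset.mem_Icc] at hm0 hm1 hn0 hn1
      set d : ℤ := k - k' with hd
      have hqz : (q : ℤ) = (a : ℤ) * (p:ℤ) ^ 2 := by rw [hqe]; push_cast; ring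
      have hdg : d • g = b' - b := by
        rw [hd, sub_smul, hk, hk', sub_eq_sub_iff_add_eq_add, hx]
        abel
      have hcomp : ∀ i : Fin 2, d • (g i) = b' i - b i := by
        intro i
        calc d • (g i) = (d • g) i := rfl
          _ = b' i - b i := by rw [hdg]; rfl
      have h0 : ((d * ((a:ℤ) * p) : ℤ) : ZMod q) = ((n0 - m0 : ℤ) : ZMod q) := by
        have h := hcomp 0
        rw [hg0, zsmul_eq_mul, ← hn0e, ← hm0e] at h
        push_cast at h ⊢
        linear_combination h
      have hq0 : (q : ℤ) ∣ d * ((a:ℤ) * p) - (n0 - m0) := by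
        rw [ZMod.intCast_eq_intCast_iff'] at h0
        exact Int.ModEq.dvd (Int.ModEq.symm h0)
      have hapq : ((a:ℤ) * p) ∣ (q : ℤ) := ⟨p, by rw [hqz]; ring⟩
      have happos : (0:ℤ) < (a:ℤ) * p := by positivity
      have hM0 : (n0 - m0 : ℤ) = 0 := by
        apply Int.eq_zero_of_abs_lt_dvd
        · have h1 : ((a:ℤ) * p) ∣ d * ((a:ℤ) * p) - (n0 - m0) := dvd_trans hapq hq0
          have h2 : ((a:ℤ) * p) ∣ d * ((a:ℤ) * p) := ⟨d, by ring⟩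
          exact (dvd_sub_right h2).mp h1
        · rw [abs_lt]
          have hse' : ((a:ℤ) * p) = 2 * e + 1 := by
            have : ((2 * e + 1 : ℕ) : ℤ) = ((a * p : ℕ) : ℤ) := by rw [hse]
            push_cast at this
            linarith
          omega
      have hpd : ∃ t : ℤ, d = p * t := by
        rw [hM0, sub_zero] at hq0
        obtain ⟨t, ht⟩ := hq0
        refine ⟨t, ?_⟩
        apply mul_right_cancel₀ (b := (a:ℤ) * p) (by positivity)
        rw [ht, hqz]; ring
      obtain ⟨t, htd⟩ := hpd
      have h1 : ((d * (a:ℤ) : ℤ) : ZMod q) = ((n1 - m1 : ℤ) : ZMod q) := by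
        have h := hcomp 1
        rw [hg1, zsmul_eq_mul, ← hn1e, ← hm1e] at h
        push_cast at h ⊢
        linear_combination h
      have hq1 : (q : ℤ) ∣ d * (a:ℤ) - (n1 - m1) := by
        rw [ZMod.intCast_eq_intCast_iff'] at h1
        exact Int.ModEq.dvd (Int.ModEq.symm h1)
      have hM1 : (n1 - m1 : ℤ) = 0 := by
        apply Int.eq_zero_of_abs_lt_dvd
        · have h1' : ((a:ℤ) * p) ∣ d * (a:ℤ) - (n1 - m1) := dvd_trans hapq hq1
          have h2 : ((a:ℤ) * p) ∣ d * (a:ℤ) := ⟨t, by rw [htd]; ring⟩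
          exact (dvd_sub_right h2).mp h1'
        · rw [abs_lt]
          have hse' : ((a:ℤ) * p) = 2 * e + 1 := by
            have : ((2 * e + 1 : ℕ) : ℤ) = ((a * p : ℕ) : ℤ) := by rw [hse]
            push_cast at this
            linarith
          omega
      have hptd : ∃ u : ℤ, t = p * u := by
        rw [hM1, sub_zero] at hq1
        obtain ⟨u, hu⟩ := hq1
        refine ⟨u, ?_⟩
        apply mul_right_cancel₀ (b := (a:ℤ) * p) (by positivity)
        have : d * (a:ℤ) = t * ((a:ℤ)*p) := by rw [htd]; ring
        rw [← this, hu, hqz]; ring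
      obtain ⟨u, hu⟩ := hptd
      have hdgz : d • g = 0 := by
        have hdval : d = (↑(p ^ 2) : ℤ) * u := by rw [htd, hu]; push_cast; ring
        rw [hdval, mul_comm, mul_smul, natCast_zsmul, hzero, smul_zero]
      have hbb : b = b' := by
        have : b' - b = 0 := by rw [← hdg, hdgz]
        have := sub_eq_zero.mp this
        exact this.symm
      have hcc : c = c' := by
        rw [hbb] at hx
        exact add_right_cancel hx
      simp [Prod.ext_iff, Subtype.ext_iff, hcc, hbb]
    · rw [Nat.card_prod, Nat.card_zmultiples, hord, ncard_ball2 hlt,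
        Nat.card_pi, Finset.prod_const]
      simp only [Nat.card_zmod, Finset.card_univ, Fintype.card_fin]
      rw [hse, hqe]; ring
  · -- nontrivial
    refine ⟨g, AddSubgroup.mem_zmultiples g, 0, AddSubgroup.zero_mem _, ?_⟩
    intro hg0'
    have : g 1 = 0 := by rw [hg0']; rfl
    rw [hg1, ZMod.natCast_eq_zero_iff] at this
    have := Nat.le_of_dvd hapos this
    nlinarith
  · -- cyclic
    refine ⟨⟨g, AddSubgroup.mem_zmultiples g⟩, ?_⟩
    rintro ⟨x, hx⟩
    obtain ⟨k, hk⟩ := AddSubgroup.mem_zmultiples_iff.mp hx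
    exact AddSubgroup.mem_zmultiples_iff.mpr ⟨k, Subtype.ext (by simpa using hk)⟩

/-- Existence of two-dimensional cyclic perfect codes: possible iff `q = a·p²`
with `p` an odd prime and `a` an odd positive integer. -/
theorem stmt8 (q : ℕ) (hq : 2 ≤ q) :
    (∃ e : ℕ, ∃ C : AddSubgroup (Fin 2 → ZMod q),
        IsPerfectCode e (C : Set (Fin 2 → ZMod q)) ∧
        (C : Set (Fin 2 → ZMod q)).Nontrivial ∧
        IsAddCyclic C) ↔
    ∃ p a : ℕ, p.Prime ∧ Odd p ∧ Odd a ∧ 0 < a ∧ q = a * p ^ 2 := by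
  constructor
  · rintro ⟨e, C, hperf, hnt, hcyc⟩
    exact forward_dir hq e C hperf hnt hcyc
  · rintro ⟨p, a, hp, hpodd, haodd, hapos, hqe⟩
    exact backward_dir hp hpodd haodd hapos hqe
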